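/- Let n ≥ 5 with n ≡ 2 (mod 3), and let V = (Fin n → ZMod 3) with the symmetric bilinear form B(x,y) = Σ_{i=1}^{n−1} x_i y_i + 2 x_n y_n (Gram determinant −1, i.e., type '−'). Then: (a) there exists an injective group homomorphism ψ from the symmetric group S_{n+1} to the group of linear automorphisms of V such that for every transposition τ ∈ S_{n+1}, ψ(τ) is a reflection t_v for some v ∈ V with B(v,v) = 2; and (b) there is no injective group homomorphism from S_{n+2} to the linear automorphisms of V sending every transposition to such a reflection. (Equivalently, φ(O_n^{−,+}(3)) = n+1 when n ≡ 2 (mod 3).) -/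

import Mathlib

/-!
The `n + 1` vectors `u k` (the unit vectors `e k` for `k < n - 1`, then `𝟙` and `𝟙 + e (n - 1)`)
have Gram matrix `I + c 𝟙ᵀ + 𝟙 cᵀ`, so the differences `u a - u b` pair like the roots
`e a - e b` of `A_n`. Hence `S_{n+1}` acts faithfully by `u a - u b ↦ u (σ a) - u (σ b)` (and
trivially on the orthogonal complement of the `u k`), transpositions acting as reflections.

Conversely, injectivity forces the roots of two transpositions to be orthogonal exactly when the
transpositions commute. For `S_{n+2}` the roots of the `n + 1` adjacent transpositions, suitably
signed, then have the Cartan matrix of `A_{n+1}` as Gram matrix, whose kernel vectors `g` satisfy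
`g m = (m + 1) g 0` and `(n + 2) g 0 = 0`. As `n + 2 ≢ 0 (mod 3)`, these `n + 1` roots would be
linearly independent in an `n`-dimensional space.
-/

open Equiv Finset Module Matrix

/-- The symmetric bilinear form `B x y = ∑_{i<n-1} x i * y i + 2 * x (n-1) * y (n-1)`
on `(ZMod 3)^n` (Gram determinant `-1`, type `-`). -/
def oForm (n : ℕ) (x y : Fin n → ZMod 3) : ZMod 3 :=
  ∑ i : Fin n, (if (i : ℕ) = n - 1 then 2 else 1) * (x i * y i)

def SendsSwapsToReflections {K V α : Type*} [CommRing K] [AddCommGroup V] [Module K V]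
    [DecidableEq α] (B : LinearMap.BilinForm K V) (ψ : Perm α →* (V ≃ₗ[K] V)) : Prop :=
  ∀ τ : Perm α, τ.IsSwap → ∃ v, B v v = 2 ∧ ∀ w, ψ τ w = w - B w v • v

/-- The differences `u a - u b` then pair like the roots `e a - e b` of type `A`. -/
def IsSimplexFrame {K V ι : Type*} [CommRing K] [AddCommGroup V] [Module K V] [DecidableEq ι]
    (B : LinearMap.BilinForm K V) (u : ι → V) (c : ι → K) : Prop :=
  ∀ k l, B (u k) (u l) = (if k = l then 1 else 0) + c k + c l

section PermRep

variable {K V ι : Type*} [CommRing K] [AddCommGroup V] [Module K V] [Fintype ι]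
  {B : LinearMap.BilinForm K V} {u : ι → V}

variable (B u) in
/-- On the differences `u a - u b` this acts as `u a - u b ↦ u (σ a) - u (σ b)` (for a simplex
frame), and it fixes every vector orthogonal to all `u j`. -/
def permRep (σ : Perm ι) : Module.End K V :=
  LinearMap.id + ∑ j, (B.flip (u j)).smulRight (u (σ j) - u j)

theorem permRep_apply (σ : Perm ι) (w : V) :
    permRep B u σ w = w + ∑ j, B w (u j) • (u (σ j) - u j) := by
  simp [permRep]

theorem permRep_one : permRep B u 1 = 1 := by
  ext w; simp [permRep_apply]

theorem sum_sub_comp_perm (u : ι → V) (σ : Perm ι) : ∑ j, (u (σ j) - u j) = 0 := by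
  rw [sum_sub_distrib, Equiv.sum_comp, sub_self]

variable [DecidableEq ι]

theorem permRep_swap {a b : ι} (hab : a ≠ b) (w : V) :
    permRep B u (swap a b) w = w - B w (u a - u b) • (u a - u b) := by
  rw [permRep_apply, Fintype.sum_eq_add a b hab (fun j hj => by
    rw [swap_apply_of_ne_of_ne hj.1 hj.2, sub_self, smul_zero]), swap_apply_left,
    swap_apply_right, map_sub]
  module

end PermRep

namespace IsSimplexFrame

variable {K V ι : Type*} [CommRing K] [AddCommGroup V] [Module K V] [DecidableEq ι]
  {B : LinearMap.BilinForm K V} {u : ι → V} {c : ι → K}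

theorem apply_sub_left (hu : IsSimplexFrame B u c) (a b j : ι) :
    B (u a - u b) (u j) = (if a = j then 1 else 0) - (if b = j then 1 else 0) + (c a - c b) := by
  rw [map_sub, LinearMap.sub_apply, hu, hu]; ring

theorem apply_sub_sub (hu : IsSimplexFrame B u c) (a b p q : ι) :
    B (u a - u b) (u p - u q) = (if a = p then 1 else 0) - (if b = p then 1 else 0)
      - ((if a = q then 1 else 0) - (if b = q then 1 else 0)) := by
  rw [map_sub, hu.apply_sub_left, hu.apply_sub_left]; ring

theorem apply_sub_self (hu : IsSimplexFrame B u c) {a b : ι} (hab : a ≠ b) :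
    B (u a - u b) (u a - u b) = 2 := by
  rw [hu.apply_sub_sub]; simp [hab, hab.symm]; norm_num

variable [Fintype ι]

theorem permRep_sub (hu : IsSimplexFrame B u c) (σ : Perm ι) (a b : ι) :
    permRep B u σ (u a - u b) = u (σ a) - u (σ b) := by
  simp only [permRep_apply, hu.apply_sub_left, add_smul, sub_smul, sum_add_distrib,
    sum_sub_distrib, ite_smul, one_smul, zero_smul, sum_ite_eq, mem_univ, if_true, ← smul_sum,
    Equiv.sum_comp, sub_self, smul_zero]
  abel

theorem apply_permRep_apply (hu : IsSimplexFrame B u c) (σ : Perm ι) (w : V) (j : ι) :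
    B (permRep B u σ w) (u j) = B w (u (σ.symm j)) + ∑ i, B w (u i) * (c (σ i) - c i) := by
  rw [permRep_apply, map_add, map_sum, LinearMap.add_apply, LinearMap.sum_apply]
  simp only [map_smul, LinearMap.smul_apply, smul_eq_mul, hu.apply_sub_left, mul_add, mul_sub,
    mul_ite, mul_one, mul_zero, sum_add_distrib, sum_sub_distrib, ← eq_symm_apply,
    sum_ite_eq', mem_univ, if_true]
  ring

theorem permRep_mul (hu : IsSimplexFrame B u c) (σ τ : Perm ι) :
    permRep B u (σ * τ) = permRep B u σ * permRep B u τ := by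
  ext w
  have h : ∑ j, B (permRep B u τ w) (u j) • (u (σ j) - u j)
      = ∑ i, B w (u i) • (u (σ (τ i)) - u (τ i)) := by
    simp only [hu.apply_permRep_apply, add_smul, sum_add_distrib, ← smul_sum, sum_sub_comp_perm,
      smul_zero, add_zero]
    exact (Equiv.sum_comp τ _).symm.trans (by simp only [symm_apply_apply])
  rw [Module.End.mul_apply, permRep_apply σ, h, permRep_apply, permRep_apply, add_assoc,
    ← sum_add_distrib]
  simp only [Perm.mul_apply, ← smul_add, sub_add_sub_cancel']

def permRepHom (hu : IsSimplexFrame B u c) : Perm ι →* Module.End K V where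
  toFun := permRep B u
  map_one' := permRep_one
  map_mul' := hu.permRep_mul

theorem eq_one_of_permRep_eq_one (hu : IsSimplexFrame B u c) (h2 : (2 : K) ≠ 0)
    (hι : 4 ≤ Fintype.card ι) {σ : Perm ι} (hσ : permRep B u σ = 1) : σ = 1 := by
  by_contra hne
  obtain ⟨a, ha⟩ : ∃ a, σ a ≠ a := not_forall.mp fun h => hne (Perm.ext h)
  obtain ⟨b, -, hb⟩ := exists_mem_notMem_of_card_lt_card (s := {a, σ a, σ.symm a}) (t := univ)
    (lt_of_le_of_lt card_le_three (by rwa [card_univ]))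
  simp only [mem_insert, mem_singleton, not_or] at hb
  obtain ⟨hba, hbσa, hbσa'⟩ := hb
  have hσb : σ b ≠ a := fun h => hbσa' (eq_symm_apply σ |>.mpr h)
  -- pair `u a - u b = u (σ a) - u (σ b)` with `u a - u (σ a)`: the two sides give `1` and `-1`
  have key := congrArg (B · (u a - u (σ a))) (hu.permRep_sub σ a b)
  simp only [hσ, Module.End.one_apply, hu.apply_sub_sub, if_true, ha, ha.symm, hba, hbσa, hσb,
    σ.injective.ne hba, if_false] at key
  exact h2 (by linear_combination key)

theorem exists_injective_sendsSwapsToReflections (hu : IsSimplexFrame B u c) (h2 : (2 : K) ≠ 0)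
    (hι : 4 ≤ Fintype.card ι) :
    ∃ ψ : Perm ι →* (V ≃ₗ[K] V), Function.Injective ψ ∧ SendsSwapsToReflections B ψ := by
  refine ⟨(LinearMap.GeneralLinearGroup.generalLinearEquiv K V).toMonoidHom.comp
    hu.permRepHom.toHomUnits, ?_, ?_⟩
  · refine (LinearMap.GeneralLinearGroup.generalLinearEquiv K V).injective.comp ?_
    have hinj : Function.Injective hu.permRepHom := (injective_iff_map_eq_one _).mpr
      fun σ => hu.eq_one_of_permRep_eq_one h2 hι
    exact fun σ τ h => hinj (congrArg Units.val h)
  · rintro _ ⟨a, b, hab, rfl⟩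
    exact ⟨u a - u b, hu.apply_sub_self hab, permRep_swap hab⟩

end IsSimplexFrame

section Reflection

variable {K V : Type*} [AddCommGroup V] {v w : V}

theorem preReflection_mul_preReflection_apply [CommRing K] [Module K V]
    (B : LinearMap.BilinForm K V) (x : V) :
    (preReflection v (B.flip v) * preReflection w (B.flip w)) x
      = x - B x w • w - (B x v - B x w * B w v) • v := by
  simp [preReflection_apply, mul_comm]

theorem commute_preReflection_of_apply_eq_zero [CommRing K] [Module K V]
    {B : LinearMap.BilinForm K V} (hvw : B v w = 0) (hwv : B w v = 0) :
    Commute (preReflection v (B.flip v)) (preReflection w (B.flip w)) := by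
  refine LinearMap.ext fun x => ?_
  rw [preReflection_mul_preReflection_apply, preReflection_mul_preReflection_apply, hvw, hwv]
  module

theorem preReflection_eq_of_commute [Field K] [Module K V] {B : LinearMap.BilinForm K V}
    (hB : B.IsSymm) (hv : B v v = 2) (hw : B w w = 2) (hvw : B v w ≠ 0)
    (h : Commute (preReflection v (B.flip v)) (preReflection w (B.flip w))) :
    preReflection v (B.flip v) = preReflection w (B.flip w) := by
  have hwv : B w v = B v w := hB.eq w v
  -- commuting reflections with non-orthogonal roots have proportional roots
  have key : ∀ x, B x w • v = B x v • w := fun x => by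
    have hx := LinearMap.congr_fun h.eq x
    rw [preReflection_mul_preReflection_apply, preReflection_mul_preReflection_apply, hwv] at hx
    refine smul_right_injective V hvw ?_
    simp only [smul_smul]
    linear_combination (norm := module) hx
  have hcv : B v w • v = (2 : K) • w := by rw [key v, hv]
  have hcw : B v w • w = (2 : K) • v := by rw [← hwv, ← key w, hw]
  refine LinearMap.ext fun x => ?_
  simp only [preReflection_apply, LinearMap.BilinForm.flip_apply, sub_right_inj]
  refine smul_right_injective V hvw ?_
  calc B v w • B x v • v = B x v • (2 : K) • w := by rw [smul_comm, hcv]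
    _ = (2 : K) • B x w • v := by rw [smul_comm, key]
    _ = B v w • B x w • w := by rw [smul_comm, ← hcw, smul_comm]

end Reflection

theorem apply_eq_zero_iff_commute {K V G : Type*} [Field K] [AddCommGroup V] [Module K V]
    [Monoid G] {B : LinearMap.BilinForm K V} {ρ : G →* Module.End K V} {s t : G} {v w : V}
    (hρ : Function.Injective ρ) (hB : B.IsSymm) (hst : s ≠ t) (hv : B v v = 2) (hw : B w w = 2)
    (hs : ρ s = preReflection v (B.flip v)) (ht : ρ t = preReflection w (B.flip w)) :
    B v w = 0 ↔ Commute s t := by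
  constructor
  · intro h0
    have hc := commute_preReflection_of_apply_eq_zero h0 ((hB.eq w v).trans h0)
    rw [← hs, ← ht] at hc
    exact hρ (by rw [map_mul, map_mul]; exact hc.eq)
  · intro hc
    by_contra h0
    have hc' := hc.map ρ
    rw [hs, ht] at hc'
    exact hst (hρ (by rw [hs, ht]; exact preReflection_eq_of_commute hB hv hw h0 hc'))

section Swap

variable {α : Type*} [DecidableEq α] {a b c d : α}

theorem swap_ne_swap (hab : a ≠ b) (hac : a ≠ c) (had : a ≠ d) : swap a b ≠ swap c d := by
  intro h
  have := congrArg (· a) h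
  simp only [swap_apply_left, swap_apply_of_ne_of_ne hac had] at this
  exact hab this.symm

theorem not_commute_swap_swap (hab : a ≠ b) (hac : a ≠ c) (hbc : b ≠ c) :
    ¬ Commute (swap a b) (swap b c) := by
  intro h
  have := congrArg (· a) h.eq
  simp only [Perm.mul_apply, swap_apply_of_ne_of_ne hab hac, swap_apply_left] at this
  exact hbc this

end Swap

section AdjSwap

variable {N : ℕ}

/-- Indices are reduced mod `N + 1`, so this is the transposition `(m, m + 1)` only for `m < N`. -/
def adjSwap (N m : ℕ) : Perm (Fin (N + 1)) :=
  swap (Fin.ofNat (N + 1) m) (Fin.ofNat (N + 1) (m + 1))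

theorem ofNat_ne_ofNat {i j : ℕ} (hi : i ≤ N) (hj : j ≤ N) (hij : i ≠ j) :
    Fin.ofNat (N + 1) i ≠ Fin.ofNat (N + 1) j := by
  simpa [Fin.ext_iff, Nat.mod_eq_of_lt (Nat.lt_succ_of_le hi),
    Nat.mod_eq_of_lt (Nat.lt_succ_of_le hj)] using hij

theorem adjSwap_isSwap {m : ℕ} (hm : m < N) : (adjSwap N m).IsSwap :=
  ⟨_, _, ofNat_ne_ofNat (by omega) hm (by omega), rfl⟩

theorem adjSwap_ne {k l : ℕ} (hkl : k < l) (hl : l < N) : adjSwap N k ≠ adjSwap N l :=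
  swap_ne_swap (ofNat_ne_ofNat (by omega) (by omega) (by omega))
    (ofNat_ne_ofNat (by omega) (by omega) (by omega))
    (ofNat_ne_ofNat (by omega) (by omega) (by omega))

theorem not_commute_adjSwap_succ {k : ℕ} (hk : k + 1 < N) :
    ¬ Commute (adjSwap N k) (adjSwap N (k + 1)) :=
  not_commute_swap_swap (ofNat_ne_ofNat (by omega) (by omega) (by omega))
    (ofNat_ne_ofNat (by omega) (by omega) (by omega))
    (ofNat_ne_ofNat (by omega) (by omega) (by omega))

theorem commute_adjSwap {k l : ℕ} (hkl : k + 1 < l) (hl : l < N) :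
    Commute (adjSwap N k) (adjSwap N l) := by
  refine (Perm.disjoint_swap_swap ?_).commute
  simp only [List.nodup_cons, List.mem_cons, List.not_mem_nil, List.nodup_nil, or_false,
    and_true, not_or, not_false_eq_true]
  refine ⟨⟨?_, ?_, ?_⟩, ⟨?_, ?_⟩, ?_⟩ <;> exact ofNat_ne_ofNat (by omega) (by omega) (by omega)

end AdjSwap

theorem eq_succ_mul_of_two_mul_sub_eq {K : Type*} [CommRing K] {N : ℕ} {G : ℕ → K}
    (h0 : 0 < N → 2 * G 0 - G 1 = 0)
    (hstep : ∀ m, m + 2 ≤ N → 2 * G (m + 1) - G m - G (m + 2) = 0) :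
    ∀ m ≤ N, G m = (m + 1) * G 0 := by
  intro m
  induction m using Nat.twoStepInduction with
  | zero => intro; ring
  | one => intro h; push_cast; linear_combination -h0 h
  | more m ih₀ ih₁ =>
    intro h
    push_cast at ih₀ ih₁ ⊢
    linear_combination -hstep m h + 2 * ih₁ (by omega) - ih₀ (by omega)

theorem eq_zero_of_vecMul_cartanA_eq_zero {K : Type*} [Field K] {N : ℕ} (hN : (N + 1 : K) ≠ 0)
    {g : Fin N → K} (h : g ᵥ* (CartanMatrix.A N).map (Int.cast : ℤ → K) = 0) : g = 0 := by
  set G : ℕ → K := fun m => if hm : m < N then g ⟨m, hm⟩ else 0 with hG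
  have hsum : ∀ j : ℕ, ∑ k : Fin N, (if (k : ℕ) = j then g k else 0) = G j := by
    intro j
    by_cases hj : j < N
    · simp only [hG, dif_pos hj, ← Fintype.sum_ite_eq' (⟨j, hj⟩ : Fin N) g, Fin.ext_iff]
    · simp only [hG, dif_neg hj]
      exact sum_eq_zero fun k _ => if_neg (by omega)
  have hrow : ∀ m (hm : m < N),
      2 * G m - (∑ k : Fin N, if (k : ℕ) + 1 = m then g k else 0) - G (m + 1) = 0 := by
    intro m hm
    have hterm : ∀ k : Fin N, g k * ((CartanMatrix.A N).map (Int.cast : ℤ → K)) k ⟨m, hm⟩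
        = 2 * (if (k : ℕ) = m then g k else 0) - (if (k : ℕ) + 1 = m then g k else 0)
          - (if (k : ℕ) = m + 1 then g k else 0) := by
      intro k
      simp only [map_apply, CartanMatrix.A, of_apply, Fin.ext_iff]
      split_ifs <;> first | omega | push_cast; ring
    have := congrFun h ⟨m, hm⟩
    simp only [vecMul, dotProduct, hterm, sum_sub_distrib, ← mul_sum, hsum, Pi.zero_apply] at this
    simpa only [hG, dif_pos hm] using this
  have hlin := eq_succ_mul_of_two_mul_sub_eq (N := N) (G := G)
    (fun hN0 => by simpa using hrow 0 hN0)
    (fun m hm => by simpa only [Nat.add_right_cancel_iff, hsum] using hrow (m + 1) (by omega))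
  have hG0 : G 0 = 0 := by
    have hlast := hlin N le_rfl
    rw [show G N = 0 from dif_neg (lt_irrefl _)] at hlast
    exact (mul_eq_zero.mp hlast.symm).resolve_left hN
  funext k
  rw [← show G k = g k from dif_pos k.isLt, hlin k k.isLt.le, hG0, mul_zero, Pi.zero_apply]

theorem linearIndependent_of_cartanA_gram {K V : Type*} [Field K] [AddCommGroup V] [Module K V]
    {B : LinearMap.BilinForm K V} {N : ℕ} {w : Fin N → V}
    (hw : ∀ k l, B (w k) (w l) = CartanMatrix.A N k l) (hN : (N + 1 : K) ≠ 0) :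
    LinearIndependent K w := by
  rw [Fintype.linearIndependent_iff]
  intro g hg
  have hrow : g ᵥ* (CartanMatrix.A N).map (Int.cast : ℤ → K) = 0 := funext fun l => by
    have := congrArg (B · (w l)) hg
    simpa [map_sum, hw, vecMul, dotProduct] using this
  exact congrFun (eq_zero_of_vecMul_cartanA_eq_zero hN hrow)

theorem exists_cartanA_gram {K V : Type*} [CommRing K] [AddCommGroup V] [Module K V]
    {B : LinearMap.BilinForm K V} (hB : B.IsSymm) {N : ℕ} {r : ℕ → V}
    (hdiag : ∀ k < N, B (r k) (r k) = 2)
    (hadj : ∀ k, k + 1 < N → B (r k) (r (k + 1)) * B (r k) (r (k + 1)) = 1)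
    (hfar : ∀ k l, l < N → k + 1 < l → B (r k) (r l) = 0) :
    ∃ w : Fin N → V, ∀ k l, B (w k) (w l) = CartanMatrix.A N k l := by
  -- a sign, chosen so that adjacent rescaled roots `ε k • r k` pair to `-1`
  set ε : ℕ → K := fun m => ∏ i ∈ range m, -B (r i) (r (i + 1)) with hε
  have hε_sq : ∀ m < N, ε m * ε m = 1 := fun m hm => by
    rw [hε, ← prod_mul_distrib]
    exact prod_eq_one fun i hi => by rw [neg_mul_neg]; exact hadj i (by simp at hi; omega)
  have hε_succ : ∀ m, ε (m + 1) = ε m * -B (r m) (r (m + 1)) := fun m => prod_range_succ _ _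
  have hle : ∀ k l : Fin N, (k : ℕ) ≤ l →
      B (ε k • r k) (ε l • r l) = CartanMatrix.A N k l := by
    intro k l hkl
    simp only [map_smul, LinearMap.smul_apply, smul_eq_mul, CartanMatrix.A, of_apply, Fin.ext_iff]
    obtain hkl | hkl := hkl.lt_or_eq
    · by_cases hadj' : (k : ℕ) + 1 = l
      · rw [← hadj', hε_succ]
        simp only [show (k : ℕ) ≠ k + 1 by omega, true_or, if_true, if_false]
        push_cast
        linear_combination (-B (r k) (r (k + 1)) * B (r k) (r (k + 1))) * hε_sq k k.isLt
          - hadj k (hadj' ▸ l.isLt)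
      · rw [hfar k l l.isLt (by omega)]
        simp only [hkl.ne, hadj', show (l : ℕ) + 1 ≠ k by omega, or_self, if_false]
        push_cast; ring
    · rw [hkl, hdiag l l.isLt]
      simp only [if_true]
      push_cast
      linear_combination 2 * hε_sq l l.isLt
  refine ⟨fun k => ε k • r k, fun k l => ?_⟩
  rcases le_total (k : ℕ) l with hkl | hkl
  · exact hle k l hkl
  · rw [← hB.eq, hle l k hkl, ← transpose_apply (CartanMatrix.A N) k l, CartanMatrix.A_transpose]

theorem not_exists_injective_sendsSwapsToReflections {V : Type*} [AddCommGroup V]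
    [Module (ZMod 3) V] [Module.Finite (ZMod 3) V] {B : LinearMap.BilinForm (ZMod 3) V}
    (hB : B.IsSymm) {N : ℕ} (hN : finrank (ZMod 3) V < N) (hN3 : (N + 1 : ZMod 3) ≠ 0) :
    ¬ ∃ ψ : Perm (Fin (N + 1)) →* (V ≃ₗ[ZMod 3] V),
      Function.Injective ψ ∧ SendsSwapsToReflections B ψ := by
  rintro ⟨ψ, hψ, hrefl⟩
  set ρ := LinearEquiv.automorphismGroup.toLinearMapMonoidHom.comp ψ
  have hρ : Function.Injective ρ := LinearEquiv.toLinearMap_injective.comp hψ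
  have hroot : ∀ m < N, ∃ v, B v v = 2 ∧ ρ (adjSwap N m) = preReflection v (B.flip v) := by
    intro m hm
    obtain ⟨v, hv, hψv⟩ := hrefl _ (adjSwap_isSwap hm)
    exact ⟨v, hv, LinearMap.ext fun w => by simp [ρ, hψv, preReflection_apply]⟩
  choose! r hr2 hrρ using hroot
  have hortho : ∀ k l, k < l → l < N →
      (B (r k) (r l) = 0 ↔ Commute (adjSwap N k) (adjSwap N l)) := fun k l hkl hl =>
    apply_eq_zero_iff_commute hρ hB (adjSwap_ne hkl hl) (hr2 k (by omega)) (hr2 l hl)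
      (hrρ k (by omega)) (hrρ l hl)
  have hsq : ∀ c : ZMod 3, c ≠ 0 → c * c = 1 := by decide
  obtain ⟨w, hw⟩ := exists_cartanA_gram hB hr2
    (fun k hk => hsq _ fun h0 =>
      not_commute_adjSwap_succ hk ((hortho k (k + 1) k.lt_succ_self hk).mp h0))
    (fun k l hl hkl => (hortho k l (by omega) hl).mpr (commute_adjSwap hkl hl))
  have := (linearIndependent_of_cartanA_gram hw hN3).fintype_card_le_finrank
  rw [Fintype.card_fin] at this
  omega

theorem oForm_succ (m : ℕ) (x y : Fin (m + 1) → ZMod 3) :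
    oForm (m + 1) x y = x ⬝ᵥ y + x (Fin.last m) * y (Fin.last m) := by
  rw [oForm, dotProduct, ← Fintype.sum_ite_eq' (Fin.last m) fun i => x i * y i,
    ← sum_add_distrib]
  congr 1; ext i
  simp only [Fin.ext_iff, Fin.val_last, add_tsub_cancel_right]
  split_ifs <;> ring

def oBilin (n : ℕ) : LinearMap.BilinForm (ZMod 3) (Fin n → ZMod 3) :=
  LinearMap.mk₂ (ZMod 3) (oForm n)
    (fun _ _ _ => by simp only [oForm, Pi.add_apply, ← sum_add_distrib]; congr 1; ext; ring)
    (fun _ _ _ => by simp only [oForm, Pi.smul_apply, smul_eq_mul, mul_sum]; congr 1; ext; ring)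
    (fun _ _ _ => by simp only [oForm, Pi.add_apply, ← sum_add_distrib]; congr 1; ext; ring)
    (fun _ _ _ => by simp only [oForm, Pi.smul_apply, smul_eq_mul, mul_sum]; congr 1; ext; ring)

theorem oBilin_apply (n : ℕ) (x y : Fin n → ZMod 3) : oBilin n x y = oForm n x y := rfl

theorem oBilin_isSymm (n : ℕ) : (oBilin n).IsSymm :=
  ⟨fun x y => by simp only [oBilin_apply, oForm]; congr 1; ext; ring⟩

def simplexFrame (m : ℕ) : Fin (m + 2) → Fin (m + 1) → ZMod 3 :=
  Fin.snoc (fun k => if k = Fin.last m then 1 else Pi.single k 1) (1 + Pi.single (Fin.last m) 1)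

def simplexShift (m : ℕ) : Fin (m + 2) → ZMod 3 :=
  Fin.snoc (fun k => if k = Fin.last m then 1 else 0) 1

theorem isSimplexFrame_simplexFrame (m : ℕ) (hm : (m : ZMod 3) = 1) :
    IsSimplexFrame (oBilin (m + 1)) (simplexFrame m) (simplexShift m) := by
  intro k l
  have h11 : (1 : Fin (m + 1) → ZMod 3) ⬝ᵥ 1 = 2 := by
    simp [dotProduct, hm]; norm_num
  induction k using Fin.lastCases <;> induction l using Fin.lastCases <;>
    simp only [simplexFrame, simplexShift, Fin.snoc_last, Fin.snoc_castSucc, Fin.castSucc_inj,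
      Fin.castSucc_ne_last, (Fin.castSucc_ne_last _).symm, if_true, if_false] <;>
    (try split_ifs) <;> subst_vars <;>
    simp_all [oBilin_apply, oForm_succ] <;> decide

/-- φ(O_n^{-,+}(3)) = n + 1 when n ≡ 2 (mod 3): S_{n+1} embeds with transpositions going to reflections t_v with B(v,v) = 2, while S_{n+2} does not. -/
theorem phi_O_minus_plus_3_mod_two (n : ℕ) (hn : 5 ≤ n) (hmod : n % 3 = 2) :
    (∃ ψ : Equiv.Perm (Fin (n + 1)) →* ((Fin n → ZMod 3) ≃ₗ[ZMod 3] (Fin n → ZMod 3)),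
      Function.Injective ψ ∧
      ∀ τ : Equiv.Perm (Fin (n + 1)), τ.IsSwap →
        ∃ v : Fin n → ZMod 3, oForm n v v = 2 ∧
          ∀ w, (ψ τ) w = w - oForm n w v • v) ∧
    ¬ (∃ ψ : Equiv.Perm (Fin (n + 2)) →* ((Fin n → ZMod 3) ≃ₗ[ZMod 3] (Fin n → ZMod 3)),
      Function.Injective ψ ∧
      ∀ τ : Equiv.Perm (Fin (n + 2)), τ.IsSwap →
        ∃ v : Fin n → ZMod 3, oForm n v v = 2 ∧
          ∀ w, (ψ τ) w = w - oForm n w v • v) := by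
  have hn3 : (n : ZMod 3) = 2 := by
    rw [← ZMod.natCast_mod, hmod]; rfl
  refine ⟨?_, not_exists_injective_sendsSwapsToReflections (oBilin_isSymm n) (N := n + 1)
    (by simp) (by push_cast; rw [hn3]; decide)⟩
  obtain ⟨m, rfl⟩ : ∃ m, n = m + 1 := ⟨n - 1, by omega⟩
  exact IsSimplexFrame.exists_injective_sendsSwapsToReflections
    (isSimplexFrame_simplexFrame m (by push_cast at hn3; linear_combination hn3))
    (by decide) (by simp only [Fintype.card_fin]; omega)
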